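/- arXiv:2405.16468 — 4 statements merged into one kernel-verified Lean document; each statement's English description precedes it below -/
import Mathlib

section
/- Let C be a Grothendieck category with a Gabriel–Popescu embedding (U, Λ, S, Q). If there exists a functor H : C → Mod Λ preserving all small colimits such that Q ∘ H is naturally isomorphic to the identity functor of C, then C satisfies Ab4*: for every (small) index set J, the functor taking a J-indexed family of objects to its direct product is exact; equivalently, a J-indexed direct product of epimorphisms in C is an epimorphism. -/
open CategoryTheory Limits Opposite

universe v u

/-- The left `End X`-module structure on `unop X ⟶ Y` for `X : Cᵒᵖ` (as in the older Mathlib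
instance `moduleEndLeft`), given by `r • f = r.unop ≫ f`. -/
instance moduleEndLeftOfOp {C : Type u} [Category.{v} C] [Preadditive C] {X : Cᵒᵖ} {Y : C} :
    Module (End X) (unop X ⟶ Y) where
  smul r f := r.unop ≫ f
  one_smul _ := Category.id_comp _
  mul_smul _ _ _ := Category.assoc _ _ _
  smul_add _ _ _ := Preadditive.comp_add _ _ _ _ _ _
  smul_zero _ := Limits.comp_zero
  add_smul _ _ _ := Preadditive.add_comp _ _ _ _ _ _
  zero_smul _ := Limits.zero_comp

/-- The older Mathlib `preadditiveCoyonedaObj (X : Cᵒᵖ) : C ⥤ ModuleCat (End X)`. -/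
def preadditiveCoyonedaObjOp {C : Type u} [Category.{v} C] [Preadditive C] (X : Cᵒᵖ) :
    C ⥤ ModuleCat.{v} (End X) where
  obj Y := ModuleCat.of _ (unop X ⟶ Y)
  map f := ModuleCat.ofHom
    { toFun := fun g => g ≫ f
      map_add' := fun _ _ => Preadditive.add_comp _ _ _ _ _ _
      map_smul' := fun _ _ => Category.assoc _ _ _ }

/-- A Gabriel–Popescu embedding for a Grothendieck category `C`: a generator `U`,
the functor `S = Hom_C(U, -)` to right modules over `Λ = End U` (realized as
`preadditiveCoyonedaObj (op U) : C ⥤ ModuleCat (End (op U))`, where the module structure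
on `U ⟶ X` is given by precomposition, i.e. the right `End U`-module structure),
together with a left adjoint `Q` of `S` which is exact, such that `S` is fully faithful. -/
structure GabrielPopescuEmbedding (C : Type u) [Category.{v} C] [Abelian C] where
  U : C
  isSeparator : IsSeparator U
  Q : ModuleCat.{v} (End (op U)) ⥤ C
  adj : Q ⊣ preadditiveCoyonedaObjOp (op U)
  qExact : PreservesFiniteLimits Q
  sFull : (preadditiveCoyonedaObjOp (op U)).Full
  sFaithful : (preadditiveCoyonedaObjOp (op U)).Faithful

/-!
If `H ⋙ Q ≅ 𝟭 C`, the functor `lim : (J ⥤ C) ⥤ C` is a retract of `F ↦ Q (lim (F ⋙ H))`.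
When `H`, `Q` and `J`-indexed limits in `D` preserve epimorphisms, so does this composite and
hence its retract `lim`, which in an abelian category means that `J`-indexed limits are exact.
Here `D = Mod Λ`, where products are exact, and `Q` preserves epimorphisms as a left adjoint,
`H` as a cocontinuous functor.
-/

namespace CategoryTheory

theorem Functor.preservesEpimorphisms_of_retract {A B : Type*} [Category* A] [Category* B]
    {F G : A ⥤ B} (h : Retract F G) [G.PreservesEpimorphisms] : F.PreservesEpimorphisms where
  preserves f _ := (MorphismProperty.epimorphisms B).of_retract
    (NatTrans.retractArrowApp ((evaluation A B).map f) h) (.infer_property (G.map f))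

instance Functor.whiskeringRight_obj_preservesEpimorphisms {K C D : Type*} [Category* K]
    [Category* C] [Category* D] [HasPushouts C] (F : C ⥤ D) [F.PreservesEpimorphisms] :
    ((Functor.whiskeringRight K C D).obj F).PreservesEpimorphisms where
  preserves f _ := inferInstanceAs (Epi (Functor.whiskerRight f F))

namespace Limits

variable {J C D : Type*} [Category* J] [Category* C] [Category* D]

noncomputable def limRetractOfCompIso [HasLimitsOfShape J C] [HasLimitsOfShape J D]
    (H : C ⥤ D) (Q : D ⥤ C) (e : H ⋙ Q ≅ 𝟭 C) :
    Retract (lim : (J ⥤ C) ⥤ C) ((Functor.whiskeringRight J C D).obj H ⋙ lim ⋙ Q) where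
  i :=
    { app F := e.inv.app (limit F) ≫ Q.map (limit.post F H)
      naturality F G α := by
        have := e.inv.naturality_assoc (limMap α) (Q.map (limit.post G H))
        dsimp at this ⊢
        rw [Category.assoc, ← Q.map_comp, ← limit.map_post, Q.map_comp, this] }
  r :=
    { app F := limit.post (F ⋙ H) Q ≫ limMap (Functor.whiskerLeft F e.hom ≫ F.rightUnitor.hom)
      naturality F G α := by
        apply limit.hom_ext
        intro j
        have := e.hom.naturality (α.app j)
        dsimp at this
        simp [← Q.map_comp_assoc, this] }
  retract := by
    ext F
    apply limit.hom_ext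
    intro j
    have := e.hom.naturality (limit.π F j)
    dsimp at this
    simp [← Q.map_comp_assoc, this]

theorem hasExactLimitsOfShape_of_compIso [Abelian C] [HasPushouts D]
    [HasLimitsOfShape J C] [HasLimitsOfShape J D] [HasExactLimitsOfShape J D]
    (H : C ⥤ D) (Q : D ⥤ C) [H.PreservesEpimorphisms] [Q.PreservesEpimorphisms]
    (e : H ⋙ Q ≅ 𝟭 C) : HasExactLimitsOfShape J C :=
  have := Functor.preservesEpimorphisms_of_retract (limRetractOfCompIso (J := J) H Q e)
  hasExactLimitsOfShape_of_preservesEpi C J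

theorem Pi.map_epi_of_hasExactLimitsOfShape [HasPushouts C] {J : Type*}
    [HasLimitsOfShape (Discrete J) C] [HasExactLimitsOfShape (Discrete J) C] {X Y : J → C}
    (φ : ∀ j, X j ⟶ Y j) [∀ j, Epi (φ j)] : Epi (Limits.Pi.map φ) :=
  have : Epi (Discrete.natTrans fun j => φ j.as : Discrete.functor X ⟶ Discrete.functor Y) :=
    (NatTrans.epi_iff_epi_app _).2 fun j => inferInstanceAs (Epi (φ j.as))
  lim.map_epi _

end Limits

end CategoryTheory

theorem stmt1_general {C : Type u} [Category.{v} C] [Abelian C] [HasLimits C]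
    (E : GabrielPopescuEmbedding C)
    (H : C ⥤ ModuleCat.{v} (End (op E.U)))
    (hH : PreservesColimits H)
    (hQH : H ⋙ E.Q ≅ 𝟭 C) :
    Nonempty (AB4Star C) ∧
    ∀ (J : Type v) (X Y : J → C) (φ : ∀ j, X j ⟶ Y j),
      (∀ j, Epi (φ j)) → Epi (Limits.Pi.map φ) := by
  have : E.Q.IsLeftAdjoint := E.adj.isLeftAdjoint
  have : AB4Star C := ⟨fun J => hasExactLimitsOfShape_of_compIso H E.Q hQH⟩
  exact ⟨⟨this⟩, fun J X Y φ _ => Pi.map_epi_of_hasExactLimitsOfShape φ⟩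

/-- If a Grothendieck category `C` with a Gabriel–Popescu embedding `(U, Λ, S, Q)` admits a
cocontinuous functor `H : C ⥤ Mod Λ` with `Q ∘ H ≅ 𝟭 C`, then `C` satisfies Ab4*:
small products are exact; equivalently, any small product of epimorphisms is an epimorphism. -/
theorem stmt1 {C : Type u} [Category.{v} C] [Abelian C] [HasLimits C] [HasColimits C] [AB5 C]
    (E : GabrielPopescuEmbedding C)
    (H : C ⥤ ModuleCat.{v} (End (op E.U)))
    (hH : PreservesColimits H)
    (hQH : H ⋙ E.Q ≅ 𝟭 C) :
    Nonempty (AB4Star C) ∧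
    ∀ (J : Type v) (X Y : J → C) (φ : ∀ j, X j ⟶ Y j),
      (∀ j, Epi (φ j)) → Epi (Limits.Pi.map φ) :=
  stmt1_general E H hH hQH
end

section
/- Let Λ be a ring and let P be a class of right Λ-modules that is closed under isomorphisms, submodules, quotient modules, arbitrary (small) direct sums, and arbitrary (small) direct products. Then there exists a unique two-sided ideal I of Λ such that for every right Λ-module M, M belongs to P if and only if M·I = 0 (i.e. m·i = 0 for all m ∈ M and i ∈ I). Conversely, for every two-sided ideal I of Λ, the class of right Λ-modules M with M·I = 0 is closed under isomorphisms, submodules, quotient modules, arbitrary direct sums, and arbitrary direct products. -/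
/-!
The ideal is the common annihilator `I` of all modules in `P`. Picking, for every `i ∉ I`, a module
of `P` and an element of it not killed by `i`, the cyclic module `Λ/I` embeds into the product of
these modules, so it lies in `P`; every module annihilated by `I` is a quotient of a direct sum of
copies of `Λ/I`, so it lies in `P` as well. Uniqueness holds because a two-sided ideal `I` is
recovered from its class of modules as the annihilator of `Λ/I`.
-/

universe u

open DirectSum MulOpposite

/-- For a ring `Λ`, a right `Λ`-module is a left `Λᵐᵒᵖ`-module; `M · I = 0` means every element
of the (two-sided) ideal `I ⊆ Λ` acts as zero on `M`. -/
def AnnihilatedBy (Λ : Type u) [Ring Λ] (I : Ideal Λ)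
    (M : Type u) [AddCommGroup M] [Module Λᵐᵒᵖ M] : Prop :=
  ∀ (m : M) (i : Λ), i ∈ I → op i • m = 0

variable {Λ : Type u} [Ring Λ]

section AnnihilatedBy

variable {I J : Ideal Λ} {M N : Type u} [AddCommGroup M] [Module Λᵐᵒᵖ M]
  [AddCommGroup N] [Module Λᵐᵒᵖ N]

theorem annihilatedBy_iff :
    AnnihilatedBy Λ I M ↔ ∀ i ∈ I, op i ∈ Module.annihilator Λᵐᵒᵖ M := by
  simp only [AnnihilatedBy, Module.mem_annihilator]
  exact ⟨fun h i hi m => h m i hi, fun h m i hi => h i hi m⟩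

theorem AnnihilatedBy.mono (hJI : J ≤ I) (h : AnnihilatedBy Λ I M) : AnnihilatedBy Λ J M :=
  fun m i hi => h m i (hJI hi)

theorem AnnihilatedBy.of_injective (f : M →ₗ[Λᵐᵒᵖ] N) (hf : Function.Injective f)
    (h : AnnihilatedBy Λ I N) : AnnihilatedBy Λ I M :=
  annihilatedBy_iff.2 fun i hi => f.annihilator_le_of_injective hf (annihilatedBy_iff.1 h i hi)

theorem AnnihilatedBy.of_surjective (f : M →ₗ[Λᵐᵒᵖ] N) (hf : Function.Surjective f)
    (h : AnnihilatedBy Λ I M) : AnnihilatedBy Λ I N :=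
  annihilatedBy_iff.2 fun i hi => f.annihilator_le_of_surjective hf (annihilatedBy_iff.1 h i hi)

theorem annihilatedBy_pi_iff {ι : Type u} {M : ι → Type u} [∀ i, AddCommGroup (M i)]
    [∀ i, Module Λᵐᵒᵖ (M i)] :
    AnnihilatedBy Λ I (∀ i, M i) ↔ ∀ i, AnnihilatedBy Λ I (M i) := by
  simp only [annihilatedBy_iff, Module.annihilator_pi, Ideal.mem_iInf]
  exact ⟨fun h j i hi => h i hi j, fun h i hi j => h j i hi⟩

theorem annihilatedBy_directSum_iff {ι : Type u} {M : ι → Type u} [∀ i, AddCommGroup (M i)]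
    [∀ i, Module Λᵐᵒᵖ (M i)] :
    AnnihilatedBy Λ I (⨁ i, M i) ↔ ∀ i, AnnihilatedBy Λ I (M i) := by
  simp only [annihilatedBy_iff, DirectSum, Module.annihilator_dfinsupp, Ideal.mem_iInf]
  exact ⟨fun h j i hi => h i hi j, fun h i hi j => h j i hi⟩

end AnnihilatedBy

abbrev ModulePred (Λ : Type u) [Ring Λ] : Type (u + 1) :=
  (M : Type u) → [AddCommGroup M] → [Module Λᵐᵒᵖ M] → Prop

namespace ModulePred

variable (P : ModulePred Λ)

def IsoClosed : Prop :=
  ∀ (M N : Type u) [AddCommGroup M] [Module Λᵐᵒᵖ M] [AddCommGroup N] [Module Λᵐᵒᵖ N],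
    (M ≃ₗ[Λᵐᵒᵖ] N) → P M → P N

def SubmoduleClosed : Prop :=
  ∀ (M : Type u) [AddCommGroup M] [Module Λᵐᵒᵖ M] (N : Submodule Λᵐᵒᵖ M), P M → P N

def QuotientClosed : Prop :=
  ∀ (M : Type u) [AddCommGroup M] [Module Λᵐᵒᵖ M] (N : Submodule Λᵐᵒᵖ M), P M → P (M ⧸ N)

def DirectSumClosed : Prop :=
  ∀ (ι : Type u) (M : ι → Type u) [∀ i, AddCommGroup (M i)] [∀ i, Module Λᵐᵒᵖ (M i)],
    (∀ i, P (M i)) → P (⨁ i, M i)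

def PiClosed : Prop :=
  ∀ (ι : Type u) (M : ι → Type u) [∀ i, AddCommGroup (M i)] [∀ i, Module Λᵐᵒᵖ (M i)],
    (∀ i, P (M i)) → P (∀ i, M i)

variable {P} {M N : Type u} [AddCommGroup M] [Module Λᵐᵒᵖ M] [AddCommGroup N] [Module Λᵐᵒᵖ N]

theorem of_injective (hIso : P.IsoClosed) (hSub : P.SubmoduleClosed) (f : M →ₗ[Λᵐᵒᵖ] N)
    (hf : Function.Injective f) (hN : P N) : P M :=
  hIso _ _ (LinearEquiv.ofInjective f hf).symm (hSub N _ hN)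

theorem of_surjective (hIso : P.IsoClosed) (hQuot : P.QuotientClosed) (f : M →ₗ[Λᵐᵒᵖ] N)
    (hf : Function.Surjective f) (hM : P M) : P N :=
  hIso _ _ (f.quotKerEquivOfSurjective hf) (hQuot M _ hM)

end ModulePred

section Closure

variable (I : Ideal Λ)

theorem isoClosed_annihilatedBy : ModulePred.IsoClosed (AnnihilatedBy Λ I) :=
  fun _ _ _ _ _ _ e h => h.of_surjective e.toLinearMap e.surjective

theorem submoduleClosed_annihilatedBy : ModulePred.SubmoduleClosed (AnnihilatedBy Λ I) :=
  fun _ _ _ N h => h.of_injective N.subtype N.injective_subtype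

theorem quotientClosed_annihilatedBy : ModulePred.QuotientClosed (AnnihilatedBy Λ I) :=
  fun _ _ _ N h => h.of_surjective N.mkQ N.mkQ_surjective

theorem directSumClosed_annihilatedBy : ModulePred.DirectSumClosed (AnnihilatedBy Λ I) :=
  fun _ _ _ _ h => annihilatedBy_directSum_iff.2 h

theorem piClosed_annihilatedBy : ModulePred.PiClosed (AnnihilatedBy Λ I) :=
  fun _ _ _ _ h => annihilatedBy_pi_iff.2 h

end Closure

section Cyclic

variable {I : Ideal Λ} (hI : ∀ i ∈ I, ∀ r : Λ, i * r ∈ I)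

/-- `Λᵐᵒᵖ ⧸ opIdeal hI` is the right `Λ`-module `Λ/I`. -/
def opIdeal : Ideal Λᵐᵒᵖ where
  carrier := {x | unop x ∈ I}
  add_mem' ha hb := I.add_mem ha hb
  zero_mem' := I.zero_mem
  smul_mem' c _ hx := hI _ hx (unop c)

@[simp]
theorem mem_opIdeal {x : Λᵐᵒᵖ} : x ∈ opIdeal hI ↔ unop x ∈ I := Iff.rfl

theorem annihilatedBy_quotient_opIdeal : AnnihilatedBy Λ I (Λᵐᵒᵖ ⧸ opIdeal hI) := by
  intro m i hi
  obtain ⟨x, rfl⟩ := Submodule.Quotient.mk_surjective _ m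
  rw [← Submodule.Quotient.mk_smul, Submodule.Quotient.mk_eq_zero, mem_opIdeal, smul_eq_mul,
    unop_mul, unop_op]
  exact I.mul_mem_left _ hi

theorem annihilatedBy_quotient_opIdeal_iff {J : Ideal Λ} :
    AnnihilatedBy Λ J (Λᵐᵒᵖ ⧸ opIdeal hI) ↔ J ≤ I := by
  refine ⟨fun h i hi => ?_, fun hJI => (annihilatedBy_quotient_opIdeal hI).mono hJI⟩
  have := h (Submodule.Quotient.mk 1) i hi
  rwa [← Submodule.Quotient.mk_smul, Submodule.Quotient.mk_eq_zero, smul_eq_mul, mul_one,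
    mem_opIdeal, unop_op] at this

theorem AnnihilatedBy.exists_surjective_directSum {M : Type u} [AddCommGroup M]
    [Module Λᵐᵒᵖ M] (h : AnnihilatedBy Λ I M) :
    ∃ f : (⨁ _ : M, Λᵐᵒᵖ ⧸ opIdeal hI) →ₗ[Λᵐᵒᵖ] M, Function.Surjective f := by
  classical
  let φ (m : M) : (Λᵐᵒᵖ ⧸ opIdeal hI) →ₗ[Λᵐᵒᵖ] M :=
    (opIdeal hI).liftQ (LinearMap.toSpanSingleton Λᵐᵒᵖ M m) fun r hr => by
      simpa using h m (unop r) hr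
  refine ⟨DirectSum.toModule Λᵐᵒᵖ M M φ, fun m =>
    ⟨DirectSum.lof Λᵐᵒᵖ M _ m (Submodule.Quotient.mk 1), ?_⟩⟩
  simp [φ]

end Cyclic

theorem Ideal.eq_of_forall_annihilatedBy_iff {I J : Ideal Λ} (hI : ∀ i ∈ I, ∀ r : Λ, i * r ∈ I)
    (hJ : ∀ i ∈ J, ∀ r : Λ, i * r ∈ J)
    (h : ∀ (M : Type u) [AddCommGroup M] [Module Λᵐᵒᵖ M],
      AnnihilatedBy Λ I M ↔ AnnihilatedBy Λ J M) : I = J :=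
  le_antisymm
    ((annihilatedBy_quotient_opIdeal_iff hJ).1 ((h _).2 (annihilatedBy_quotient_opIdeal hJ)))
    ((annihilatedBy_quotient_opIdeal_iff hI).1 ((h _).1 (annihilatedBy_quotient_opIdeal hI)))

section ClassAnnihilator

variable (P : ModulePred Λ)

def classAnnihilator : Ideal Λ where
  carrier := {i | ∀ (M : Type u) [AddCommGroup M] [Module Λᵐᵒᵖ M], P M → ∀ m : M, op i • m = 0}
  add_mem' ha hb M _ _ hM m := by rw [op_add, add_smul, ha M hM, hb M hM, add_zero]
  zero_mem' M _ _ _ m := by rw [op_zero, zero_smul]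
  smul_mem' c i hi M _ _ hM m := by rw [smul_eq_mul, op_mul, mul_smul, hi M hM]

theorem mem_classAnnihilator {i : Λ} : i ∈ classAnnihilator P ↔
    ∀ (M : Type u) [AddCommGroup M] [Module Λᵐᵒᵖ M], P M → ∀ m : M, op i • m = 0 :=
  Iff.rfl

theorem classAnnihilator_mul_mem (i : Λ) (hi : i ∈ classAnnihilator P) (r : Λ) :
    i * r ∈ classAnnihilator P := fun M _ _ hM m => by
  rw [op_mul, mul_smul, hi M hM, smul_zero]

variable {P}

theorem annihilatedBy_classAnnihilator {M : Type u} [AddCommGroup M] [Module Λᵐᵒᵖ M]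
    (hM : P M) : AnnihilatedBy Λ (classAnnihilator P) M :=
  fun m _ hi => hi M hM m

theorem ModulePred.quotient_opIdeal_classAnnihilator_mem (hIso : P.IsoClosed)
    (hSub : P.SubmoduleClosed) (hProd : P.PiClosed) : P (Λᵐᵒᵖ ⧸ opIdeal (classAnnihilator_mul_mem P)) := by
  have witness (i : {i : Λ // i ∉ classAnnihilator P}) : ∃ (M : Type u) (_ : AddCommGroup M)
      (_ : Module Λᵐᵒᵖ M), P M ∧ ∃ m : M, op i.1 • m ≠ 0 := by
    simpa [mem_classAnnihilator] using i.2
  choose W _ _ hW w hw using witness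
  let f := LinearMap.pi fun x => LinearMap.toSpanSingleton Λᵐᵒᵖ (W x) (w x)
  have hker : opIdeal (classAnnihilator_mul_mem P) = LinearMap.ker f := by
    ext r
    simp only [mem_opIdeal, LinearMap.mem_ker, f, LinearMap.pi_apply,
      LinearMap.toSpanSingleton_apply, funext_iff, Pi.zero_apply]
    refine ⟨fun hr x => by simpa using hr _ (hW x) (w x), fun hr => ?_⟩
    by_contra hr'
    exact hw ⟨unop r, hr'⟩ (by simpa using hr ⟨unop r, hr'⟩)
  exact ModulePred.of_injective hIso hSub _
    (LinearMap.ker_eq_bot.1 (Submodule.ker_liftQ_eq_bot' _ f hker)) (hProd _ W hW)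

theorem ModulePred.iff_annihilatedBy_classAnnihilator (hIso : P.IsoClosed)
    (hSub : P.SubmoduleClosed) (hQuot : P.QuotientClosed) (hSum : P.DirectSumClosed)
    (hProd : P.PiClosed) (M : Type u) [AddCommGroup M] [Module Λᵐᵒᵖ M] :
    P M ↔ AnnihilatedBy Λ (classAnnihilator P) M := by
  refine ⟨annihilatedBy_classAnnihilator, fun h => ?_⟩
  obtain ⟨f, hf⟩ := h.exists_surjective_directSum (classAnnihilator_mul_mem P)
  exact of_surjective hIso hQuot f hf
    (hSum _ _ fun _ => quotient_opIdeal_classAnnihilator_mem hIso hSub hProd)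

end ClassAnnihilator

/-- A class of right `Λ`-modules closed under isomorphisms, submodules, quotient modules,
direct sums and direct products is precisely the class of modules annihilated by a unique
two-sided ideal `I` of `Λ`; and conversely, for every two-sided ideal `I` the class of right
`Λ`-modules annihilated by `I` has all these closure properties. -/
theorem stmt5 (Λ : Type u) [Ring Λ] :
    (∀ P : (M : Type u) → [AddCommGroup M] → [Module Λᵐᵒᵖ M] → Prop,
      -- closed under isomorphisms
      (∀ (M N : Type u) [AddCommGroup M] [Module Λᵐᵒᵖ M] [AddCommGroup N] [Module Λᵐᵒᵖ N],
        (M ≃ₗ[Λᵐᵒᵖ] N) → P M → P N) →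
      -- closed under submodules
      (∀ (M : Type u) [AddCommGroup M] [Module Λᵐᵒᵖ M] (N : Submodule Λᵐᵒᵖ M), P M → P N) →
      -- closed under quotient modules
      (∀ (M : Type u) [AddCommGroup M] [Module Λᵐᵒᵖ M] (N : Submodule Λᵐᵒᵖ M), P M → P (M ⧸ N)) →
      -- closed under small direct sums
      (∀ (ι : Type u) (M : ι → Type u) [∀ i, AddCommGroup (M i)] [∀ i, Module Λᵐᵒᵖ (M i)],
        (∀ i, P (M i)) → P (⨁ i, M i)) →
      -- closed under small direct products
      (∀ (ι : Type u) (M : ι → Type u) [∀ i, AddCommGroup (M i)] [∀ i, Module Λᵐᵒᵖ (M i)],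
        (∀ i, P (M i)) → P (∀ i, M i)) →
      -- conclusion: a unique two-sided ideal whose annihilated modules are exactly those in `P`
      ∃ I : Ideal Λ, (∀ i ∈ I, ∀ r : Λ, i * r ∈ I) ∧
        (∀ (M : Type u) [AddCommGroup M] [Module Λᵐᵒᵖ M], P M ↔ AnnihilatedBy Λ I M) ∧
        ∀ I' : Ideal Λ, (∀ i ∈ I', ∀ r : Λ, i * r ∈ I') →
          (∀ (M : Type u) [AddCommGroup M] [Module Λᵐᵒᵖ M], P M ↔ AnnihilatedBy Λ I' M) →
          I' = I)
    ∧
    -- converse: for every two-sided ideal `I`, the annihilated class has the closure properties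
    (∀ I : Ideal Λ, (∀ i ∈ I, ∀ r : Λ, i * r ∈ I) →
      (∀ (M N : Type u) [AddCommGroup M] [Module Λᵐᵒᵖ M] [AddCommGroup N] [Module Λᵐᵒᵖ N],
        (M ≃ₗ[Λᵐᵒᵖ] N) → AnnihilatedBy Λ I M → AnnihilatedBy Λ I N) ∧
      (∀ (M : Type u) [AddCommGroup M] [Module Λᵐᵒᵖ M] (N : Submodule Λᵐᵒᵖ M),
        AnnihilatedBy Λ I M → AnnihilatedBy Λ I N) ∧
      (∀ (M : Type u) [AddCommGroup M] [Module Λᵐᵒᵖ M] (N : Submodule Λᵐᵒᵖ M),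
        AnnihilatedBy Λ I M → AnnihilatedBy Λ I (M ⧸ N)) ∧
      (∀ (ι : Type u) (M : ι → Type u) [∀ i, AddCommGroup (M i)] [∀ i, Module Λᵐᵒᵖ (M i)],
        (∀ i, AnnihilatedBy Λ I (M i)) → AnnihilatedBy Λ I (⨁ i, M i)) ∧
      (∀ (ι : Type u) (M : ι → Type u) [∀ i, AddCommGroup (M i)] [∀ i, Module Λᵐᵒᵖ (M i)],
        (∀ i, AnnihilatedBy Λ I (M i)) → AnnihilatedBy Λ I (∀ i, M i))) := by
  refine ⟨fun P hIso hSub hQuot hSum hProd => ?_, fun I _ => ?_⟩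
  · have hP := ModulePred.iff_annihilatedBy_classAnnihilator hIso hSub hQuot hSum hProd
    refine ⟨classAnnihilator P, classAnnihilator_mul_mem P, hP, fun I' hI' hP' => ?_⟩
    exact Ideal.eq_of_forall_annihilatedBy_iff hI' (classAnnihilator_mul_mem P)
      fun M _ _ => (hP' M).symm.trans (hP M)
  · exact ⟨isoClosed_annihilatedBy I, submoduleClosed_annihilatedBy I,
      quotientClosed_annihilatedBy I, directSumClosed_annihilatedBy I, piClosed_annihilatedBy I⟩
end

section
/- Let Λ be a ring and I a two-sided ideal of Λ. The class of right Λ-modules M with M·I = 0 is closed under extensions (that is: whenever 0 → L → M → N → 0 is a short exact sequence of right Λ-modules with L·I = 0 and N·I = 0, also M·I = 0) if and only if I is idempotent, i.e. I·I = I. -/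
universe u

open MulOpposite

/-!
If `M` is an extension of `N` by `L`, then for `a ∈ J`, `b ∈ I` and `m ∈ M` the element `m a`
dies in `N`, so it comes from `L`, where `b` kills it: `m (a b) = 0`. Hence extensions of
`I`-annihilated modules are annihilated by `I²`, which settles one direction when `I² = I`.
Conversely `0 → I/I² → Λ/I² → Λ/I → 0` is an extension of right modules annihilated by `I`,
and `1 · I = 0` in `Λ/I²` forces `I ⊆ I²`.
-/

variable {Λ : Type u} [Ring Λ]

def Ideal.toRightIdeal (I : Ideal Λ) [I.IsTwoSided] : Submodule Λᵐᵒᵖ Λ where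
  carrier := I
  add_mem' := I.add_mem
  zero_mem' := I.zero_mem
  smul_mem' r _ hx := I.mul_mem_right r.unop hx

theorem annihilatedBy_mul_of_ker_le_range {I J : Ideal Λ} {L M N : Type u}
    [AddCommGroup L] [Module Λᵐᵒᵖ L] [AddCommGroup M] [Module Λᵐᵒᵖ M]
    [AddCommGroup N] [Module Λᵐᵒᵖ N] (f : L →ₗ[Λᵐᵒᵖ] M) (g : M →ₗ[Λᵐᵒᵖ] N)
    (hfg : LinearMap.ker g ≤ LinearMap.range f)
    (hL : AnnihilatedBy Λ I L) (hN : AnnihilatedBy Λ J N) : AnnihilatedBy Λ (J * I) M := by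
  intro m i hi
  refine Submodule.mul_induction_on hi (fun a ha b hb => ?_) (fun x y hx hy => ?_)
  · obtain ⟨l, hl⟩ : op a • m ∈ LinearMap.range f :=
      hfg (by rw [LinearMap.mem_ker, map_smul, hN (g m) a ha])
    rw [op_mul, mul_smul, ← hl, ← map_smul, hL l b hb, map_zero]
  · rw [op_add, add_smul, hx, hy, add_zero]

theorem Submodule.Quotient.op_smul_mk (K : Submodule Λᵐᵒᵖ Λ) (i y : Λ) :
    op i • (Submodule.Quotient.mk y : Λ ⧸ K) = Submodule.Quotient.mk (y * i) :=
  (Submodule.Quotient.mk_smul K (op i) y).symm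

theorem annihilatedBy_quotient_iff {I : Ideal Λ} {K : Submodule Λᵐᵒᵖ Λ} :
    AnnihilatedBy Λ I (Λ ⧸ K) ↔ ∀ i ∈ I, i ∈ K := by
  refine ⟨fun h i hi => ?_, fun h m i hi => ?_⟩
  · have h1 := h (Submodule.Quotient.mk 1) i hi
    rwa [Submodule.Quotient.op_smul_mk, one_mul, Submodule.Quotient.mk_eq_zero] at h1
  · obtain ⟨y, rfl⟩ := Submodule.Quotient.mk_surjective K m
    rw [Submodule.Quotient.op_smul_mk, Submodule.Quotient.mk_eq_zero]
    exact h _ (I.mul_mem_left y hi)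

theorem annihilatedBy_map_mkQ {I : Ideal Λ} {J K : Submodule Λᵐᵒᵖ Λ}
    (hJK : ∀ j ∈ J, ∀ i ∈ I, j * i ∈ K) : AnnihilatedBy Λ I (J.map K.mkQ) := by
  rintro ⟨_, j, hj, rfl⟩ i hi
  refine Subtype.ext ((Submodule.Quotient.op_smul_mk K i j).trans ?_)
  exact (Submodule.Quotient.mk_eq_zero K).2 (hJK j hj i hi)

/-- For a two-sided ideal `I` of a ring `Λ`, the class of right `Λ`-modules annihilated by `I`
is closed under extensions (for every short exact sequence `0 → L → M → N → 0` with `L·I = 0`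
and `N·I = 0` one has `M·I = 0`) if and only if `I` is idempotent, i.e. `I·I = I`. -/
theorem stmt6 (Λ : Type u) [Ring Λ] (I : Ideal Λ) (hI : ∀ i ∈ I, ∀ r : Λ, i * r ∈ I) :
    (∀ (L M N : Type u) [AddCommGroup L] [Module Λᵐᵒᵖ L] [AddCommGroup M] [Module Λᵐᵒᵖ M]
      [AddCommGroup N] [Module Λᵐᵒᵖ N] (f : L →ₗ[Λᵐᵒᵖ] M) (g : M →ₗ[Λᵐᵒᵖ] N),
      Function.Injective f → Function.Surjective g → LinearMap.range f = LinearMap.ker g →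
      AnnihilatedBy Λ I L → AnnihilatedBy Λ I N → AnnihilatedBy Λ I M)
    ↔ I * I = I := by
  have : I.IsTwoSided := ⟨fun r hi => hI _ hi r⟩
  refine ⟨fun h => le_antisymm Ideal.mul_le_left fun i hi => ?_,
    fun h L M N _ _ _ _ _ _ f g _ _ hfg hL hN =>
      h ▸ annihilatedBy_mul_of_ker_le_range f g hfg.ge hL hN⟩
  set J := I.toRightIdeal
  set K := (I * I).toRightIdeal
  have hKJ : K ≤ J := fun _ => (Ideal.mul_le_left (J := I) ·)
  have hM := h (J.map K.mkQ) (Λ ⧸ K) (Λ ⧸ J) (Submodule.subtype _) (Submodule.factor hKJ)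
    Subtype.val_injective (Submodule.factor_surjective hKJ)
    (by rw [Submodule.range_subtype, Submodule.ker_mapQ, Submodule.comap_id])
    (annihilatedBy_map_mkQ fun _ hj _ hi => Ideal.mul_mem_mul hj hi)
    (annihilatedBy_quotient_iff.2 fun _ hi => hi)
  exact annihilatedBy_quotient_iff.1 hM i hi
end

section
/- Let Λ be a ring and M a right Λ-module. For every index set J and every family (S_j)_{j∈J}, where each S_j is a nonempty upward-directed set of submodules of M, the following equality holds in the complete lattice of submodules of M: ⨅_{j∈J} (sup S_j) = ⨆_{f ∈ ∏_{j∈J} S_j} ⨅_{j∈J} f(j), where the supremum on the right ranges over all choice functions f with f(j) ∈ S_j for all j ∈ J. In particular, the category of right Λ-modules satisfies Grothendieck's condition Ab6. -/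
universe u w

/-- The lattice of submodules of any module satisfies Grothendieck's condition Ab6:
an arbitrary intersection of directed unions is the directed union of the intersections
over all choice functions. In particular `Mod Λ` satisfies Ab6.
(Right `Λ`-modules are left `Λᵐᵒᵖ`-modules.) -/
theorem stmt8 (Λ : Type u) [Ring Λ] (M : Type u) [AddCommGroup M] [Module Λᵐᵒᵖ M]
    (J : Type w) (S : J → Set (Submodule Λᵐᵒᵖ M))
    (hne : ∀ j, (S j).Nonempty) (hdir : ∀ j, DirectedOn (· ≤ ·) (S j)) :
    ⨅ j, sSup (S j) = ⨆ f : (∀ j, S j), ⨅ j, (f j : Submodule Λᵐᵒᵖ M) := by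
  apply le_antisymm
  · intro x hx
    have h : ∀ j, ∃ N ∈ S j, x ∈ N := fun j =>
      (Submodule.mem_sSup_of_directed (hne j) (hdir j)).1 (Submodule.mem_iInf _ |>.1 hx j)
    choose N hN hxN using h
    exact Submodule.mem_iSup_of_mem (fun j => ⟨N j, hN j⟩)
      (Submodule.mem_iInf _ |>.2 hxN)
  · exact iSup_le fun f => le_iInf fun j => (iInf_le _ j).trans (le_sSup (f j).2)
end
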